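/- Let 0 < α < β < 1 and let V_α, V_β be the varieties generated by A_α and A_β respectively. Then the variety V_α ∩ V_β is nilpotent: there exists m such that c_{m+2}(V_α ∩ V_β) = 0, i.e., every product of m+2 elements in any algebra of V_α ∩ V_β is zero. -/

import Mathlib

noncomputable section

open Filter Topology

/-- Is a free-magma element a single leaf? -/
def FreeMagma.isLeaf {X : Type*} : FreeMagma X → Bool
  | .of _ => true
  | .mul _ _ => false

/-- The number of occurrences of the subword `a·a` in a monomial in one generator `a`. -/
def countSq : FreeMagma Unit → ℕ
  | .of _ => 0
  | .mul x y => countSq x + countSq y + (if x.isLeaf && y.isLeaf then 1 else 0)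

variable (F : Type) [Field F] [CharZero F]

/-- The free nonassociative (non-unital) algebra on one generator `a`. -/
abbrev FA := FreeNonUnitalNonAssocAlgebra F Unit

/-- The monomial of `FA F` corresponding to a magma word. -/
def mono (m : FreeMagma Unit) : FA F := MonoidAlgebra.single m (1 : F)

/-- The relations ideal of `A`: the span of all monomials containing two or more
subwords equal to `a²`.  The algebra `A` of the paper is `FA F` modulo `relI F`. -/
def relI : Submodule F (FA F) :=
  Submodule.span F {x : FA F | ∃ m : FreeMagma Unit, 2 ≤ countSq m ∧ x = mono F m}

/-- Number of occurrences of the variable `i` in a magma word over `ℕ`. -/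
def occ : FreeMagma ℕ → ℕ → ℕ
  | .of j, i => if j = i then 1 else 0
  | .mul x y, i => occ x i + occ y i

/-- The free nonassociative algebra on countably many variables `x₀, x₁, …`. -/
abbrev FreeN := FreeNonUnitalNonAssocAlgebra F ℕ

/-- The monomial of `FreeN F` corresponding to a magma word. -/
def monoN (t : FreeMagma ℕ) : FreeN F := MonoidAlgebra.single t (1 : F)

/-- `P_n`: the space of multilinear polynomials in the variables `x₀, …, x_{n-1}`. -/
def Pmulti (n : ℕ) : Submodule F (FreeN F) :=
  Submodule.span F {x : FreeN F | ∃ t : FreeMagma ℕ,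
    (∀ i : ℕ, occ t i = if i < n then 1 else 0) ∧ x = monoN F t}

/-- The identities of the algebra `A = FA F / relI F`: polynomials vanishing under every
substitution of elements of `A`. -/
def IdA : Submodule F (FreeN F) :=
  ⨅ xs : ℕ → FA F,
    Submodule.comap (FreeNonUnitalNonAssocAlgebra.lift F xs : FreeN F →ₗ[F] FA F) (relI F)

/-- The `n`-th codimension of `A`: the dimension of `P_n/(P_n ∩ Id(A))`. -/
def codimA (n : ℕ) : ℕ :=
  Module.finrank F (↥(Pmulti F n) ⧸ Submodule.comap (Pmulti F n).subtype (IdA F))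

/-- Apply a word in `L_a` (letter `0`) and `R_a` (letter `1`) to a magma element,
left-to-right. -/
def chain (t : FreeMagma Unit) : List (Fin 2) → FreeMagma Unit
  | [] => t
  | b :: rest => chain (if b = 1 then t * FreeMagma.of () else FreeMagma.of () * t) rest

/-- The monomial `a²`. -/
def aSq : FreeMagma Unit := FreeMagma.of () * FreeMagma.of ()

/-- `subt s m` : `s` occurs as a subterm of the magma word `m`. -/
def subt (s : FreeMagma Unit) : FreeMagma Unit → Prop
  | .of x => s = .of x
  | .mul a b => s = FreeMagma.mul a b ∨ subt s a ∨ subt s b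

/-- `u` is a factor of the infinite word `w`. -/
def IsFactor (u : List (Fin 2)) (w : ℕ → Fin 2) : Prop :=
  ∃ i : ℕ, ∀ j : ℕ, j < u.length → u.getD j 0 = w (i + j)

/-- Monomials lying in the ideal `I_w` of relations of `A_w`: those with two subwords `a²`,
or containing some `a²u(L_a,R_a)` with `u` not a factor of `w` as a subterm. -/
def badMono (w : ℕ → Fin 2) (m : FreeMagma Unit) : Prop :=
  2 ≤ countSq m ∨ ∃ u : List (Fin 2), ¬ IsFactor u w ∧ subt (chain aSq u) m

/-- The relations ideal of the algebra `A_w = A/I_w`, inside the free algebra. -/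
def relIW (w : ℕ → Fin 2) : Submodule F (FA F) :=
  Submodule.span F {x : FA F | ∃ m : FreeMagma Unit, badMono w m ∧ x = mono F m}

/-- The identities of `A_w`. -/
def IdW (w : ℕ → Fin 2) : Submodule F (FreeN F) :=
  ⨅ xs : ℕ → FA F,
    Submodule.comap (FreeNonUnitalNonAssocAlgebra.lift F xs : FreeN F →ₗ[F] FA F) (relIW F w)

/-- The `n`-th codimension of `A_w`. -/
def codimW (w : ℕ → Fin 2) (n : ℕ) : ℕ :=
  Module.finrank F (↥(Pmulti F n) ⧸ Submodule.comap (Pmulti F n).subtype (IdW F w))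

/-- Number of `1`'s among `w 0, …, w (n-1)`. -/
def pcount (w : ℕ → Fin 2) (n : ℕ) : ℕ := ((Finset.range n).filter fun i => w i = 1).card

/-- The set of factors of length `n` of `w`, and the complexity function. -/
def Factors (w : ℕ → Fin 2) (n : ℕ) : Set (Fin n → Fin 2) :=
  {v | ∃ i : ℕ, ∀ j : Fin n, v j = w (i + j)}

noncomputable def Comp (w : ℕ → Fin 2) (n : ℕ) : ℕ := (Factors w n).ncard

/-- Number of leaves (degree) of a magma word. -/
def numLeaves : FreeMagma ℕ → ℕ
  | .of _ => 1
  | .mul x y => numLeaves x + numLeaves y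

/-- An algebra `B` lies in the variety generated by `A_w` iff it satisfies all
identities of `A_w`. -/
def InVarietyOf (w : ℕ → Fin 2) (B : Type) [NonUnitalNonAssocRing B] [Module F B]
    [IsScalarTower F B B] [SMulCommClass F B B] : Prop :=
  ∀ f : FreeN F, f ∈ IdW F w →
    ∀ xs : ℕ → B, FreeNonUnitalNonAssocAlgebra.lift F xs f = 0

/-!
A Sturmian word is balanced: a minimal pair of factors of equal length whose numbers of `1`s
differ by two has the form `1T1`, `0T0` with `T` a palindrome; `T` is then the unique right
special factor of its length, one of `0T1`, `1T0` is missing, and the palindrome forces every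
return to `T` to repeat the same block, so the word would be eventually periodic. A periodic word
is balanced up to its period. As the frequencies `α ≠ β` differ, for large `m` no word of length
`m` is a factor of both `w_α` and `w_β`, so every left-normed product `y₁y₂ū` with `|u| = m`
vanishes on `V_α ∩ V_β`. Any other product of `m + 2` factors contains a subproduct `(ab)(cd)`,
which vanishes since `A_γ² · A_γ² = 0`.
-/

theorem Fin.eq_of_ne_of_ne {a c d : Fin 2} (hcd : c ≠ d) (hac : a ≠ c) : a = d := by
  fin_cases a <;> fin_cases c <;> fin_cases d <;> simp_all

namespace BinaryWord

variable {w : ℕ → Fin 2}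

def window (w : ℕ → Fin 2) (i n : ℕ) : Fin n → Fin 2 := fun j => w (i + j)

theorem window_eq_iff {i j n : ℕ} :
    window w i n = window w j n ↔ ∀ t < n, w (i + t) = w (j + t) :=
  ⟨fun h t ht => congrFun h ⟨t, ht⟩, fun h => funext fun t => h t t.2⟩

theorem window_add_eq_of_window_eq {i j n m k : ℕ} (h : window w i (n + m) = window w j (n + m))
    (hk : k ≤ m) : window w (i + k) n = window w (j + k) n := by
  rw [window_eq_iff] at h ⊢
  intro t ht
  simpa only [add_assoc] using h (k + t) (by omega)

theorem window_succ_eq_cons (i n : ℕ) :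
    window w i (n + 1) = Fin.cons (w i) (window w (i + 1) n) := by
  funext t
  cases t using Fin.cases with
  | zero => simp [window]
  | succ t => simp [window, add_assoc, add_comm 1]

theorem window_eq_of_next_eq {i j n : ℕ} (h : window w i n = window w j n) :
    ∀ m, (∀ k < m, window w (i + k) n = window w (j + k) n → w (i + k + n) = w (j + k + n)) →
      window w i (n + m) = window w j (n + m)
  | 0, _ => h
  | m + 1, hnext => by
    have ih := window_eq_of_next_eq h m fun k hk => hnext k (by omega)
    have hlast := hnext m (by omega) (window_add_eq_of_window_eq ih le_rfl)
    rw [window_eq_iff] at ih ⊢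
    intro t ht
    rcases Nat.lt_or_ge t (n + m) with ht' | ht'
    · exact ih t ht'
    · obtain rfl : t = n + m := by omega
      simpa only [add_comm n m, add_assoc] using hlast

theorem mem_factors_iff {n : ℕ} {v : Fin n → Fin 2} : v ∈ Factors w n ↔ ∃ i, window w i n = v := by
  simp only [Factors, Set.mem_ofPred_eq, funext_iff, window, eq_comm]

theorem window_mem_factors (i n : ℕ) : window w i n ∈ Factors w n := mem_factors_iff.2 ⟨i, rfl⟩

def factorSet (w : ℕ → Fin 2) (n : ℕ) : Finset (Fin n → Fin 2) :=
  (Set.toFinite (Factors w n)).toFinset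

theorem mem_factorSet {n : ℕ} {v : Fin n → Fin 2} : v ∈ factorSet w n ↔ ∃ i, window w i n = v := by
  rw [factorSet, Set.Finite.mem_toFinset, mem_factors_iff]

theorem window_mem_factorSet (i n : ℕ) : window w i n ∈ factorSet w n := mem_factorSet.2 ⟨i, rfl⟩

theorem card_factorSet (n : ℕ) : (factorSet w n).card = Comp w n :=
  (Set.ncard_eq_toFinset_card _ _).symm

theorem comp_zero : Comp w 0 = 1 := by
  have : Factors w 0 = Set.univ := Set.eq_univ_of_forall fun v => ⟨0, fun j => j.elim0⟩
  simp [Comp, this]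

def IsRightSpecial (w : ℕ → Fin 2) {n : ℕ} (v : Fin n → Fin 2) : Prop :=
  ∃ i j, window w i n = v ∧ window w j n = v ∧ w (i + n) ≠ w (j + n)

/-- Each right special factor of length `n` has two extensions of length `n + 1`, every other
factor at least one. -/
theorem comp_add_card_le {n : ℕ} (s : Finset (Fin n → Fin 2)) (hs : ∀ v ∈ s, IsRightSpecial w v) :
    Comp w n + s.card ≤ Comp w (n + 1) := by
  classical
  have hsub : s ⊆ factorSet w n := fun v hv => by
    obtain ⟨i, -, hi, -⟩ := hs v hv
    exact mem_factorSet.2 ⟨i, hi⟩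
  have hfiber : ∀ v ∈ factorSet w n, 1 + (if v ∈ s then 1 else 0) ≤
      ((factorSet w (n + 1)).filter (Fin.init · = v)).card := by
    intro v hv
    have mem : ∀ i, window w i n = v → window w i (n + 1) ∈
        (factorSet w (n + 1)).filter (Fin.init · = v) := fun i hi =>
      Finset.mem_filter.2 ⟨window_mem_factorSet i _, hi⟩
    split_ifs with hvs
    · obtain ⟨i, j, hi, hj, hij⟩ := hs v hvs
      refine Finset.one_lt_card.2 ⟨_, mem i hi, _, mem j hj, fun h => hij ?_⟩
      exact congrFun h (Fin.last n)
    · obtain ⟨i, hi⟩ := mem_factorSet.1 hv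
      exact Finset.card_pos.2 ⟨_, mem i hi⟩
  calc Comp w n + s.card
      = ∑ v ∈ factorSet w n, (1 + if v ∈ s then 1 else 0) := by
        rw [Finset.sum_add_distrib, Finset.sum_boole, Finset.filter_mem_eq_inter,
          Finset.inter_eq_right.2 hsub, ← card_factorSet]
        simp
    _ ≤ ∑ v ∈ factorSet w n, ((factorSet w (n + 1)).filter (Fin.init · = v)).card :=
        Finset.sum_le_sum hfiber
    _ = Comp w (n + 1) := by
        rw [← card_factorSet, Finset.card_eq_sum_card_fiberwise (f := Fin.init)]
        intro u hu
        obtain ⟨i, rfl⟩ := mem_factorSet.1 hu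
        exact window_mem_factorSet i n

def EventuallyPeriodic (w : ℕ → Fin 2) : Prop :=
  ∃ N p, 0 < p ∧ ∀ t, N ≤ t → w (t + p) = w t

theorem eventuallyPeriodic_of_rightDetermined {k : ℕ}
    (hdet : ∀ i j, window w i k = window w j k → w (i + k) = w (j + k)) : EventuallyPeriodic w := by
  obtain ⟨i, j, hne, hij⟩ := Finite.exists_ne_map_eq_of_infinite fun i => window w i k
  wlog hlt : i < j generalizing i j
  · exact this j i hne.symm hij.symm (by omega)
  refine ⟨i, j - i, by omega, fun t ht => ?_⟩
  have := window_eq_of_next_eq hij (t - i + 1) fun m _ h => hdet _ _ h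
  have := (window_eq_iff.1 this) (t - i) (by omega)
  rw [show i + (t - i) = t by omega, show j + (t - i) = t + (j - i) by omega] at this
  exact this.symm

/-- Morse–Hedlund. -/
theorem eventuallyPeriodic_of_comp_le {n : ℕ} (h : Comp w n ≤ n) : EventuallyPeriodic w := by
  obtain ⟨k, hk⟩ : ∃ k, Comp w (k + 1) ≤ Comp w k := by
    by_contra! hgrow
    have : ∀ m, m + 1 ≤ Comp w m := fun m => by
      induction m with
      | zero => rw [comp_zero]
      | succ m ih => exact (Nat.succ_le_succ ih).trans (hgrow m)
    exact absurd (this n) (by omega)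
  refine eventuallyPeriodic_of_rightDetermined (k := k) fun i j hij => ?_
  by_contra hne
  have := comp_add_card_le ({window w i k} : Finset (Fin k → Fin 2)) fun v hv => by
    rw [Finset.mem_singleton.1 hv]
    exact ⟨i, j, rfl, hij.symm, hne⟩
  rw [Finset.card_singleton] at this
  omega

theorem EventuallyPeriodic.comp_le (h : EventuallyPeriodic w) : ∃ K, ∀ n, Comp w n ≤ K := by
  obtain ⟨N, p, hp, hper⟩ := h
  refine ⟨N + p, fun n => ?_⟩
  have hback : ∀ i, ∃ i' < N + p, window w i' n = window w i n := by
    intro i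
    induction i using Nat.strong_induction_on with
    | _ i ih =>
      by_cases hi : i < N + p
      · exact ⟨i, hi, rfl⟩
      obtain ⟨i', hi', he⟩ := ih (i - p) (by omega)
      refine ⟨i', hi', he.trans (window_eq_iff.2 fun t _ => ?_)⟩
      rw [← hper (i - p + t) (by omega), show i - p + t + p = i + t by omega]
  have hsub : Factors w n ⊆ ((Finset.range (N + p)).image fun i => window w i n : Set _) := by
    intro v hv
    obtain ⟨i, rfl⟩ := mem_factors_iff.1 hv
    obtain ⟨i', hi', he⟩ := hback i
    exact Finset.mem_coe.2 (Finset.mem_image.2 ⟨i', Finset.mem_range.2 hi', he⟩)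
  calc Comp w n ≤ _ := Set.ncard_le_ncard hsub (Finset.finite_toSet _)
    _ ≤ N + p := by
      rw [Set.ncard_coe_finset]
      exact Finset.card_image_le.trans (Finset.card_range _).le

def IsSturmian (w : ℕ → Fin 2) : Prop := ∀ n, 1 ≤ n → Comp w n = n + 1

theorem IsSturmian.comp_eq (hw : IsSturmian w) (n : ℕ) : Comp w n = n + 1 := by
  rcases Nat.eq_zero_or_pos n with rfl | hn
  · exact comp_zero
  · exact hw n hn

theorem IsSturmian.not_eventuallyPeriodic (hw : IsSturmian w) : ¬ EventuallyPeriodic w :=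
  fun h => by
  obtain ⟨K, hK⟩ := h.comp_le
  have := hK K
  rw [hw.comp_eq] at this
  omega

/-- Every factor occurs arbitrarily far out: otherwise the tail of `w` beyond its last occurrence
would have at most `n` factors of length `n`. -/
theorem IsSturmian.exists_window_eq (hw : IsSturmian w) (i n N : ℕ) :
    ∃ j, N ≤ j ∧ window w j n = window w i n := by
  by_contra! hfar
  have htail : Factors (fun t => w (t + N)) n ⊂ Factors w n := by
    refine Set.ssubset_iff_of_subset (fun v hv => ?_) |>.2 ⟨_, window_mem_factors i n, fun hv => ?_⟩
    · obtain ⟨j, rfl⟩ := mem_factors_iff.1 hv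
      exact mem_factors_iff.2 ⟨j + N, funext fun t => by simp only [window]; ring_nf⟩
    · obtain ⟨j, hj⟩ := mem_factors_iff.1 hv
      refine hfar (j + N) (by omega) (Eq.trans (funext fun t => ?_) hj)
      simp only [window]; ring_nf
  have hlt := Set.ncard_lt_ncard htail (Set.toFinite _)
  change Comp _ n < Comp w n at hlt
  rw [hw.comp_eq] at hlt
  obtain ⟨M, p, hp, hper⟩ :=
    eventuallyPeriodic_of_comp_le (by omega : Comp (fun t => w (t + N)) n ≤ n)
  refine hw.not_eventuallyPeriodic ⟨M + N, p, hp, fun t ht => ?_⟩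
  have := hper (t - N) (by omega)
  simp only at this
  rwa [show t - N + p + N = t + p by omega, show t - N + N = t by omega] at this

theorem IsSturmian.eq_of_isRightSpecial (hw : IsSturmian w) {n : ℕ} {u v : Fin n → Fin 2}
    (hu : IsRightSpecial w u) (hv : IsRightSpecial w v) : u = v := by
  classical
  by_contra hne
  have := comp_add_card_le {u, v} fun x hx => by
    rcases Finset.mem_insert.1 hx with rfl | hx
    · exact hu
    · rwa [Finset.mem_singleton.1 hx]
  rw [Finset.card_pair hne, hw.comp_eq, hw.comp_eq] at this
  omega

def OccursFlanked (w : ℕ → Fin 2) (a : Fin 2) {n : ℕ} (T : Fin n → Fin 2) (b : Fin 2) : Prop :=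
  ∃ i, w i = a ∧ window w (i + 1) n = T ∧ w (i + 1 + n) = b

theorem isRightSpecial_cons {n : ℕ} {a : Fin 2} {T : Fin n → Fin 2} (h0 : OccursFlanked w a T 0)
    (h1 : OccursFlanked w a T 1) : IsRightSpecial w (Fin.cons a T : Fin (n + 1) → Fin 2) := by
  obtain ⟨i, hi, hiT, hi0⟩ := h0
  obtain ⟨j, hj, hjT, hj1⟩ := h1
  refine ⟨i, j, ?_, ?_, ?_⟩
  · rw [window_succ_eq_cons, hi, hiT]
  · rw [window_succ_eq_cons, hj, hjT]
  · rw [show i + (n + 1) = i + 1 + n by omega, show j + (n + 1) = j + 1 + n by omega, hi0, hj1]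
    decide

/-- The `p` windows met before the first return to `T` are distinct, because every window
other than `T` determines the next letter. -/
theorem le_comp_of_first_return {s p n : ℕ} {T : Fin n → Fin 2}
    (hdet : ∀ i j, window w i n = window w j n → window w i n ≠ T → w (i + n) = w (j + n))
    (hs : window w s n = T) (hp : window w (s + p) n = T)
    (hmin : ∀ a, 0 < a → a < p → window w (s + a) n ≠ T) : p ≤ Comp w n := by
  have hne : ∀ a a', a < a' → a' < p → window w (s + a) n ≠ window w (s + a') n := by
    intro a a' hlt ha' he
    rcases Nat.eq_zero_or_pos a with rfl | ha0
    · exact hmin a' (by omega) ha' (he.symm.trans hs)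
    have hrun := window_eq_of_next_eq he (p - a') fun k hk hk' =>
      hdet _ _ hk' (by rw [add_assoc]; exact hmin (a + k) (by omega) (by omega))
    have := window_add_eq_of_window_eq hrun (le_refl (p - a'))
    rw [add_assoc, add_assoc, show a' + (p - a') = p by omega] at this
    exact hmin (a + (p - a')) (by omega) (by omega) (this.trans hp)
  have hinj : Set.InjOn (fun a => window w (s + a) n) (Finset.range p) := by
    intro a ha a' ha' he
    simp only [Finset.coe_range, Set.mem_Iio] at ha ha'
    rcases lt_trichotomy a a' with h | h | h
    · exact absurd he (hne a a' h ha')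
    · exact h
    · exact absurd he.symm (hne a' a h ha)
  calc p = (Finset.range p).card := (Finset.card_range p).symm
    _ ≤ (factorSet w n).card := Finset.card_le_card_of_injOn _
          (fun a _ => window_mem_factorSet _ _) hinj
    _ = Comp w n := card_factorSet n

/-- If `p ≤ n`, both letters are the letter of the palindrome `T` at position `p - 1`, read from
either end. -/
theorem letter_before_return {s p n : ℕ} {T : Fin n → Fin 2} (hT : ∀ k, T k.rev = T k)
    (hs : window w s n = T) (hp : window w (s + p) n = T) (hp0 : 0 < p) (hpn : p ≤ n + 1) :
    w (s + p - 1) = w (s + n) := by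
  rcases Nat.eq_or_lt_of_le hpn with rfl | hpn
  · rfl
  have hrev : (⟨p - 1, by omega⟩ : Fin n).rev = ⟨n - p, by omega⟩ := by
    ext; simp only [Fin.val_rev]; omega
  have h1 := congrFun hs ⟨p - 1, by omega⟩
  have h2 := congrFun hp ⟨n - p, by omega⟩
  simp only [window] at h1 h2
  rw [show s + p - 1 = s + (p - 1) by omega, h1, ← hT, hrev, ← h2,
    show s + p + (n - p) = s + n by omega]

theorem eventuallyPeriodic_of_recurring_block {Q : ℕ → Prop} {t₀ p L : ℕ} (hp : 0 < p)
    (hpL : p ≤ L) (h₀ : Q t₀) (hstep : ∀ t, Q t → Q (t + p) ∧ window w t L = window w t₀ L) :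
    EventuallyPeriodic w := by
  have hQ : ∀ k, Q (t₀ + k * p) := fun k => by
    induction k with
    | zero => simpa using h₀
    | succ k ih => simpa [add_mul, add_assoc] using (hstep _ ih).1
  have hblock : ∀ k, ∀ r < p, w (t₀ + k * p + r) = w (t₀ + r) := fun k r hr =>
    window_eq_iff.1 (hstep _ (hQ k)).2 r (by omega)
  refine ⟨t₀, p, hp, fun t ht => ?_⟩
  obtain ⟨k, r, hr, rfl⟩ : ∃ k r, r < p ∧ t = t₀ + k * p + r :=
    ⟨(t - t₀) / p, (t - t₀) % p, Nat.mod_lt _ hp, by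
      have := Nat.div_add_mod' (t - t₀) p; omega⟩
  rw [hblock k r hr, show t₀ + k * p + r + p = t₀ + (k + 1) * p + r by ring, hblock _ r hr]

theorem IsSturmian.next_eq_of_window_eq (hw : IsSturmian w) {n : ℕ} {T : Fin n → Fin 2}
    (hT : IsRightSpecial w T) {i j : ℕ} (hij : window w i n = window w j n)
    (hiT : window w i n ≠ T) : w (i + n) = w (j + n) :=
  by_contra fun hne => hiT (hw.eq_of_isRightSpecial ⟨i, j, rfl, hij.symm, hne⟩ hT)

theorem IsSturmian.exists_first_return (hw : IsSturmian w) (s n : ℕ) :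
    ∃ p, 0 < p ∧ window w (s + p) n = window w s n ∧
      ∀ a, 0 < a → a < p → window w (s + a) n ≠ window w s n := by
  classical
  have hex : ∃ q, window w (s + (q + 1)) n = window w s n := by
    obtain ⟨j, hj, hjs⟩ := hw.exists_window_eq s n (s + 1)
    exact ⟨j - s - 1, by rwa [show s + (j - s - 1 + 1) = j by omega]⟩
  refine ⟨Nat.find hex + 1, Nat.succ_pos _, Nat.find_spec hex, fun a ha hap h => ?_⟩
  exact Nat.find_min hex (m := a - 1) (by omega) (by rwa [Nat.sub_add_cancel ha])

/-- From an occurrence of `cTc` the word runs deterministically until `T` reappears, again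
preceded by `c` (by `letter_before_return`), hence again followed by `c`. -/
theorem IsSturmian.eventuallyPeriodic_of_not_occursFlanked (hw : IsSturmian w) {n : ℕ}
    {T : Fin n → Fin 2} (hT : ∀ k, T k.rev = T k) {c d : Fin 2} (hcd : c ≠ d)
    (hc : OccursFlanked w c T c) (hd : OccursFlanked w d T d) (hmiss : ¬ OccursFlanked w c T d) :
    EventuallyPeriodic w := by
  obtain ⟨i₀, hi₀, hi₀T, hi₀'⟩ := hc
  have hTrs : IsRightSpecial w T := by
    obtain ⟨j, -, hjT, hj⟩ := hd
    exact ⟨i₀ + 1, j + 1, hi₀T, hjT, by rw [hi₀', hj]; exact hcd⟩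
  obtain ⟨p, hp0, hp, hmin⟩ := hw.exists_first_return (i₀ + 1) n
  rw [hi₀T] at hp hmin
  have hpn : p ≤ n + 1 := hw.comp_eq n ▸
    le_comp_of_first_return (fun i j => hw.next_eq_of_window_eq hTrs) hi₀T hp hmin
  have hprev : w (i₀ + p) = c := by
    rw [show i₀ + p = i₀ + 1 + p - 1 by omega, letter_before_return hT hi₀T hp hp0 hpn, hi₀']
  have hnext : ∀ t, w t = c → window w (t + 1) n = T → w (t + 1 + n) = c := fun t ht htT =>
    by_contra fun hne => hmiss ⟨t, ht, htT, Fin.eq_of_ne_of_ne hcd hne⟩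
  refine eventuallyPeriodic_of_recurring_block (L := n + p + 1) hp0 (by omega)
    (Q := fun t => w t = c ∧ window w (t + 1) n = T ∧ w (t + 1 + n) = c) ⟨hi₀, hi₀T, hi₀'⟩ ?_
  rintro t ⟨htc, htT, htc'⟩
  have hrun : window w (t + 1) (n + p) = window w (i₀ + 1) (n + p) :=
    window_eq_of_next_eq (htT.trans hi₀T.symm) p fun k hk hk' => by
      rcases Nat.eq_zero_or_pos k with rfl | hk0
      · rw [add_zero, add_zero, htc', hi₀']
      · exact hw.next_eq_of_window_eq hTrs hk' (hk' ▸ hmin k hk0 hk)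
  have htp : w (t + p) = c := by
    rw [← hprev, show t + p = t + 1 + (p - 1) by omega, show i₀ + p = i₀ + 1 + (p - 1) by omega]
    exact window_eq_iff.1 hrun (p - 1) (by omega)
  have htpT : window w (t + p + 1) n = T := by
    rw [add_right_comm, ← hp]
    exact window_add_eq_of_window_eq hrun le_rfl
  refine ⟨⟨htp, htpT, hnext _ htp htpT⟩, ?_⟩
  rw [window_succ_eq_cons, window_succ_eq_cons, htc, hi₀, hrun]

theorem pcount_succ (w : ℕ → Fin 2) (k : ℕ) :
    pcount w (k + 1) = pcount w k + if w k = 1 then 1 else 0 := by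
  unfold pcount
  rw [Finset.range_add_one, Finset.filter_insert]
  split_ifs with h
  · exact Finset.card_insert_of_notMem (by simp)
  · rfl

theorem pcount_mono (w : ℕ → Fin 2) : Monotone (pcount w) :=
  monotone_nat_of_le_succ fun k => by rw [pcount_succ]; omega

theorem pcount_add_le (w : ℕ → Fin 2) (i n : ℕ) : pcount w (i + n) ≤ pcount w i + n := by
  induction n with
  | zero => rfl
  | succ n ih => rw [← add_assoc, pcount_succ]; split_ifs <;> omega

def onesIn (w : ℕ → Fin 2) (i n : ℕ) : ℕ := pcount w (i + n) - pcount w i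

theorem onesIn_succ (w : ℕ → Fin 2) (i n : ℕ) :
    onesIn w i (n + 1) = onesIn w i n + if w (i + n) = 1 then 1 else 0 := by
  have := pcount_mono w (Nat.le_add_right i n)
  rw [onesIn, onesIn, ← add_assoc, pcount_succ]
  omega

theorem onesIn_congr {w' : ℕ → Fin 2} {i j : ℕ} :
    ∀ {n}, (∀ t < n, w (i + t) = w' (j + t)) → onesIn w i n = onesIn w' j n
  | 0, _ => by simp [onesIn]
  | n + 1, h => by
    rw [onesIn_succ, onesIn_succ, onesIn_congr fun t ht => h t (by omega), h n (by omega)]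

theorem onesIn_eq_of_reverse {i j : ℕ} :
    ∀ {n}, (∀ t < n, w (i + t) = w (j + (n - 1 - t))) → onesIn w i n = onesIn w j n
  | 0, _ => by simp [onesIn]
  | n + 1, h => by
    have hfirst : onesIn w i (n + 1) = (if w i = 1 then 1 else 0) + onesIn w (i + 1) n := by
      have := pcount_mono w (show i + 1 ≤ i + 1 + n by omega)
      have := pcount_succ w i
      rw [onesIn, onesIn, show i + (n + 1) = i + 1 + n by omega]
      omega
    have hmid : onesIn w (i + 1) n = onesIn w j n := onesIn_eq_of_reverse fun t ht => by
      rw [add_assoc, add_comm 1 t, h (t + 1) (by omega)]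
      congr 2
      omega
    have h0 := h 0 (by omega)
    rw [add_zero, Nat.add_sub_cancel, Nat.sub_zero] at h0
    rw [hfirst, onesIn_succ, hmid, h0, add_comm]

theorem pcount_succ_cases (w : ℕ → Fin 2) (k : ℕ) :
    pcount w (k + 1) = pcount w k ∨ pcount w (k + 1) = pcount w k + 1 := by
  rw [pcount_succ]; split_ifs <;> simp

theorem eq_one_iff_pcount_succ {k : ℕ} : w k = 1 ↔ pcount w (k + 1) = pcount w k + 1 := by
  rw [pcount_succ]; split_ifs with h <;> simp [h]

theorem eq_zero_iff_pcount_succ {k : ℕ} : w k = 0 ↔ pcount w (k + 1) = pcount w k := by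
  rw [pcount_succ]
  split_ifs with h
  · simp [h]
  · simpa using Fin.eq_of_ne_of_ne (by decide) h

theorem onesIn_add (w : ℕ → Fin 2) (i m m' : ℕ) :
    onesIn w i (m + m') = onesIn w i m + onesIn w (i + m) m' := by
  have := pcount_mono w (Nat.le_add_right i m)
  have := pcount_mono w (Nat.le_add_right (i + m) m')
  simp only [onesIn, ← add_assoc] at *
  omega

theorem onesIn_add_two (w : ℕ → Fin 2) (i m : ℕ) : onesIn w i (m + 2) =
    (if w i = 1 then 1 else 0) + onesIn w (i + 1) m + if w (i + 1 + m) = 1 then 1 else 0 := by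
  rw [show m + 2 = 1 + m + 1 by omega, onesIn_succ, onesIn_add, onesIn_succ]
  simp [onesIn, ← add_assoc]

theorem onesIn_le (w : ℕ → Fin 2) (i n : ℕ) : onesIn w i n ≤ n := by
  have := pcount_add_le w i n
  unfold onesIn
  omega

theorem onesIn_zero_left (w : ℕ → Fin 2) (n : ℕ) : onesIn w 0 n = pcount w n := by
  simp [onesIn, pcount]

theorem lt_sub_of_first_asymmetry {α : Type*} {f : ℕ → α} {n k : ℕ} (hk : k < n)
    (hdiff : f k ≠ f (n - 1 - k)) (hbefore : ∀ t < k, f t = f (n - 1 - t)) : k < n - 1 - k := by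
  by_contra hle
  rcases Nat.eq_or_lt_of_le (not_lt.1 hle) with heq | hlt
  · exact hdiff (by rw [heq])
  · have := hbefore (n - 1 - k) hlt
    rw [show n - 1 - (n - 1 - k) = k by omega] at this
    exact hdiff this.symm

def IsMinimalUnbalanced (w : ℕ → Fin 2) (n i j : ℕ) : Prop :=
  onesIn w j (n + 2) + 2 ≤ onesIn w i (n + 2) ∧ ∀ m < n + 2, ∀ a b, onesIn w a m ≤ onesIn w b m + 1

namespace IsMinimalUnbalanced

variable {n i j : ℕ}

theorem flank (h : IsMinimalUnbalanced w n i j) :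
    w i = 1 ∧ w j = 0 ∧ w (i + 1 + n) = 1 ∧ w (j + 1 + n) = 0 ∧
      onesIn w (i + 1) n = onesIn w (j + 1) n := by
  obtain ⟨hbad, hmin⟩ := h
  rw [eq_one_iff_pcount_succ, eq_zero_iff_pcount_succ, eq_one_iff_pcount_succ,
    eq_zero_iff_pcount_succ]
  have := hmin (n + 1) (by omega) (i + 1) (j + 1)
  have := hmin (n + 1) (by omega) i j
  have := pcount_succ_cases w i
  have := pcount_succ_cases w j
  have := pcount_succ_cases w (i + 1 + n)
  have := pcount_succ_cases w (j + 1 + n)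
  have := pcount_mono w (Nat.le_add_right (i + 1) n)
  have := pcount_mono w (Nat.le_add_right (j + 1) n)
  simp only [onesIn] at *
  ring_nf at *
  omega

theorem middle_eq (h : IsMinimalUnbalanced w n i j) : window w (i + 1) n = window w (j + 1) n := by
  classical
  obtain ⟨hi, hj, hi', hj', -⟩ := h.flank
  obtain ⟨hbad, hmin⟩ := h
  by_contra hne
  simp only [window_eq_iff, not_forall, exists_prop] at hne
  obtain ⟨k, ⟨hk, hdiff⟩, hfirst⟩ : ∃ k, (k < n ∧ ¬w (i + 1 + k) = w (j + 1 + k)) ∧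
      ∀ t < k, ¬(t < n ∧ ¬w (i + 1 + t) = w (j + 1 + t)) :=
    ⟨_, Nat.find_spec hne, fun t => Nat.find_min hne⟩
  have hx : onesIn w (i + 1) k = onesIn w (j + 1) k :=
    onesIn_congr fun t ht => by_contra fun h => hfirst t ht ⟨by omega, h⟩
  obtain ⟨r, hr⟩ : ∃ r, n = k + 1 + r := ⟨n - k - 1, by omega⟩
  by_cases hik : w (i + 1 + k) = 1
  · have hjk : w (j + 1 + k) = 0 := Fin.eq_of_ne_of_ne (by decide) (hik ▸ Ne.symm hdiff)
    have := hmin (k + 2) (by omega) i j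
    rw [onesIn_add_two, onesIn_add_two, hi, hj, hik, hjk] at this
    simp at this
    omega
  · have hik : w (i + 1 + k) = 0 := Fin.eq_of_ne_of_ne (by decide) hik
    have hjk : w (j + 1 + k) = 1 := Fin.eq_of_ne_of_ne (by decide) (hik ▸ Ne.symm hdiff)
    have := hmin (r + 1) (by omega) (i + (k + 2)) (j + (k + 2))
    rw [show n + 2 = (k + 2) + (r + 1) by omega, onesIn_add w i, onesIn_add w j, onesIn_add_two,
      onesIn_add_two, hi, hj, hik, hjk] at hbad
    simp at hbad
    omega

theorem middle_palindrome (h : IsMinimalUnbalanced w n i j) :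
    ∀ t < n, w (i + 1 + t) = w (i + 1 + (n - 1 - t)) := by
  classical
  obtain ⟨hi, hj, hi', hj', -⟩ := h.flank
  have hmid := window_eq_iff.1 h.middle_eq
  have hmin := h.2
  by_contra hne
  simp only [not_forall, exists_prop] at hne
  obtain ⟨k, ⟨hk, hdiff⟩, hfirst⟩ : ∃ k, (k < n ∧ ¬w (i + 1 + k) = w (i + 1 + (n - 1 - k))) ∧
      ∀ t < k, ¬(t < n ∧ ¬w (i + 1 + t) = w (i + 1 + (n - 1 - t))) :=
    ⟨_, Nat.find_spec hne, fun t => Nat.find_min hne⟩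
  have hbefore : ∀ t < k, w (i + 1 + t) = w (i + 1 + (n - 1 - t)) :=
    fun t ht => by_contra fun h => hfirst t ht ⟨by omega, h⟩
  have hk2 : k < n - 1 - k := lt_sub_of_first_asymmetry hk hdiff hbefore
  have hxy : onesIn w (i + 1) k = onesIn w (i + 1 + (n - k)) k :=
    onesIn_eq_of_reverse fun t ht => by rw [hbefore t ht]; congr 1; omega
  have hxj : onesIn w (j + 1) k = onesIn w (i + 1) k :=
    onesIn_congr fun t ht => (hmid t (by omega)).symm
  have hyj : onesIn w (j + 1 + (n - k)) k = onesIn w (i + 1 + (n - k)) k :=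
    onesIn_congr fun t ht => by
      rw [add_assoc (j + 1), add_assoc (i + 1), hmid (n - k + t) (by omega)]
  have hpos1 : i + 1 + (n - 1 - k) + 1 = i + 1 + (n - k) := by omega
  have hpos2 : i + 1 + (n - k) + k = i + 1 + n := by omega
  have hpos1' : j + 1 + (n - 1 - k) + 1 = j + 1 + (n - k) := by omega
  have hpos2' : j + 1 + (n - k) + k = j + 1 + n := by omega
  by_cases hik : w (i + 1 + k) = 1
  · have hik' : w (i + 1 + (n - 1 - k)) = 0 :=
      Fin.eq_of_ne_of_ne (by decide) (hik ▸ Ne.symm hdiff)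
    have hjk' : w (j + 1 + (n - 1 - k)) = 0 := by rw [← hmid _ (by omega)]; exact hik'
    have := hmin (k + 2) (by omega) i (j + 1 + (n - 1 - k))
    rw [onesIn_add_two, onesIn_add_two, hi, hik, hjk', hpos1', hpos2', hj'] at this
    simp at this
    omega
  · have hik : w (i + 1 + k) = 0 := Fin.eq_of_ne_of_ne (by decide) hik
    have hik' : w (i + 1 + (n - 1 - k)) = 1 :=
      Fin.eq_of_ne_of_ne (by decide) (hik ▸ Ne.symm hdiff)
    have hjk : w (j + 1 + k) = 0 := by rw [← hmid _ (by omega)]; exact hik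
    have := hmin (k + 2) (by omega) (i + 1 + (n - 1 - k)) j
    rw [onesIn_add_two, onesIn_add_two, hj, hjk, hik', hpos1, hpos2, hi'] at this
    simp at this
    omega

end IsMinimalUnbalanced

theorem onesIn_le_onesIn_add_dist (w : ℕ → Fin 2) (i j n : ℕ) :
    onesIn w i n ≤ onesIn w j n + Nat.dist i j := by
  unfold onesIn Nat.dist
  rcases le_total i j with h | h
  · have := pcount_mono w (show i + n ≤ j + n by omega)
    have := pcount_add_le w i (j - i)
    rw [Nat.add_sub_cancel' h] at this
    omega
  · have := pcount_mono w h
    have := pcount_add_le w (j + n) (i - j)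
    rw [show j + n + (i - j) = i + n by omega] at this
    omega

def IsBalanced (w : ℕ → Fin 2) (C : ℕ) : Prop := ∀ n i j, onesIn w i n ≤ onesIn w j n + C

theorem isBalanced_of_periodic {p : ℕ} (hp : 0 < p) (hper : Function.Periodic w p) :
    IsBalanced w p := by
  have hmod : ∀ i n, onesIn w i n = onesIn w (i % p) n := fun i n =>
    onesIn_congr fun t _ => by
      rw [← hper.map_mod_nat (i + t), ← hper.map_mod_nat (i % p + t), Nat.mod_add_mod]
  intro n i j
  rw [hmod i, hmod j]
  have := onesIn_le_onesIn_add_dist w (i % p) (j % p) n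
  have := Nat.mod_lt i hp
  have := Nat.mod_lt j hp
  unfold Nat.dist at *
  omega

theorem exists_occursFlanked_palindrome_of_not_isBalanced (h : ¬ IsBalanced w 1) :
    ∃ n, ∃ T : Fin n → Fin 2, (∀ k, T k.rev = T k) ∧ OccursFlanked w 1 T 1 ∧
      OccursFlanked w 0 T 0 := by
  classical
  have hex : ∃ L i j, onesIn w j L + 2 ≤ onesIn w i L := by
    simp only [IsBalanced, not_forall, not_le] at h
    obtain ⟨L, i, j, h⟩ := h
    exact ⟨L, i, j, h⟩
  obtain ⟨i, j, hbad⟩ := Nat.find_spec hex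
  have hmin : ∀ m < Nat.find hex, ∀ a b, onesIn w a m ≤ onesIn w b m + 1 := fun m hm a b => by
    have := Nat.find_min hex hm
    simp only [not_exists, not_le] at this
    have := this a b
    omega
  obtain ⟨n, hn⟩ : ∃ n, Nat.find hex = n + 2 :=
    ⟨Nat.find hex - 2, by have := onesIn_le w i (Nat.find hex); omega⟩
  rw [hn] at hbad hmin
  have hmu : IsMinimalUnbalanced w n i j := ⟨hbad, hmin⟩
  obtain ⟨hi, hj, hi', hj', -⟩ := hmu.flank
  refine ⟨n, window w (i + 1) n, fun k => ?_, ⟨i, hi, rfl, hi'⟩, ⟨j, hj, hmu.middle_eq.symm, hj'⟩⟩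
  simp only [window, Fin.val_rev]
  rw [hmu.middle_palindrome k k.2]
  congr 2
  omega

theorem IsSturmian.isBalanced (hw : IsSturmian w) : IsBalanced w 1 := by
  by_contra h
  obtain ⟨n, T, hT, h1, h0⟩ := exists_occursFlanked_palindrome_of_not_isBalanced h
  by_cases h01 : OccursFlanked w 0 T 1
  · have h10 : ¬ OccursFlanked w 1 T 0 := fun h10 => by
      have := congrFun (hw.eq_of_isRightSpecial (isRightSpecial_cons h0 h01)
        (isRightSpecial_cons h10 h1)) 0
      simp at this
    exact hw.not_eventuallyPeriodic
      (hw.eventuallyPeriodic_of_not_occursFlanked hT (by decide) h1 h0 h10)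
  · exact hw.not_eventuallyPeriodic
      (hw.eventuallyPeriodic_of_not_occursFlanked hT (by decide) h0 h1 h01)

theorem exists_length_not_isFactor {wa wb : ℕ → Fin 2} {α β : ℝ} {Ca Cb : ℕ}
    (hα : Tendsto (fun n : ℕ => (pcount wa n : ℝ) / n) atTop (𝓝 α))
    (hβ : Tendsto (fun n : ℕ => (pcount wb n : ℝ) / n) atTop (𝓝 β)) (hαβ : α < β)
    (ha : IsBalanced wa Ca) (hb : IsBalanced wb Cb) :
    ∃ m, ∀ u : List (Fin 2), u.length = m → ¬ IsFactor u wa ∨ ¬ IsFactor u wb := by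
  have hgap : Tendsto (fun n : ℕ => (pcount wb n : ℝ) - pcount wa n) atTop atTop := by
    refine ((hβ.sub hα).pos_mul_atTop (sub_pos.2 hαβ) tendsto_natCast_atTop_atTop).congr' ?_
    filter_upwards [eventually_ne_atTop 0] with n hn
    field_simp
  obtain ⟨m, hm⟩ := (hgap.eventually_gt_atTop ((Ca + Cb : ℕ) : ℝ)).exists
  refine ⟨m, fun u hu => ?_⟩
  by_contra! hboth
  obtain ⟨⟨i, hi⟩, ⟨j, hj⟩⟩ := hboth
  have hij : onesIn wb j m = onesIn wa i m :=
    onesIn_congr fun t ht => by rw [← hi t (by omega), hj t (by omega)]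
  have := ha m i 0
  have := hb m 0 j
  rw [onesIn_zero_left] at *
  have : pcount wb m ≤ pcount wa m + (Ca + Cb) := by omega
  have : (pcount wb m : ℝ) ≤ pcount wa m + ((Ca + Cb : ℕ) : ℝ) := by exact_mod_cast this
  linarith

theorem exists_isBalanced {w : ℕ → Fin 2}
    (h : IsSturmian w ∨ ∃ T : ℕ, 0 < T ∧ ∀ i, w i = w (i + T)) : ∃ C, IsBalanced w C := by
  rcases h with hw | ⟨T, hT, hper⟩
  · exact ⟨1, hw.isBalanced⟩
  · exact ⟨T, isBalanced_of_periodic hT fun i => (hper i).symm⟩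

end BinaryWord

open BinaryWord

section Comb

variable {γ δ : Type*} [Mul γ] [Mul δ]

/-- The operators `R_y` (`b = 1`) and `L_y` (`b = 0`) of the paper. -/
def mulOn (b : Fin 2) (x y : γ) : γ := if b = 1 then x * y else y * x

def comb (t : γ) (L : List (Fin 2 × γ)) : γ := L.foldl (fun x p => mulOn p.1 x p.2) t

theorem comb_append_singleton (t : γ) (L : List (Fin 2 × γ)) (p : Fin 2 × γ) :
    comb t (L ++ [p]) = mulOn p.1 (comb t L) p.2 := List.foldl_append ..

theorem map_comb (φ : γ →ₙ* δ) (t : γ) (L : List (Fin 2 × γ)) :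
    φ (comb t L) = comb (φ t) (L.map (Prod.map id φ)) := by
  unfold comb
  rw [List.foldl_map]
  refine (List.foldl_hom φ fun x ⟨b, y⟩ => ?_).symm
  simp only [Prod.map, id, mulOn]
  split_ifs <;> simp

end Comb

theorem chain_append_singleton (t : FreeMagma Unit) (v : List (Fin 2)) (b : Fin 2) :
    chain t (v ++ [b]) = mulOn b (chain t v) (FreeMagma.of ()) := by
  induction v generalizing t with
  | nil => rfl
  | cons a v ih => exact ih _

theorem countSq_add_le_countSq_mul (x y : FreeMagma Unit) :
    countSq x + countSq y ≤ countSq (x * y) := Nat.le_add_right _ _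

theorem countSq_add_le_countSq_mulOn (b : Fin 2) (x y : FreeMagma Unit) :
    countSq x + countSq y ≤ countSq (mulOn b x y) := by
  unfold mulOn
  split_ifs
  · exact countSq_add_le_countSq_mul x y
  · exact (add_comm _ _).le.trans (countSq_add_le_countSq_mul y x)

theorem countSq_le_countSq_chain (t : FreeMagma Unit) (v : List (Fin 2)) :
    countSq t ≤ countSq (chain t v) := by
  induction v generalizing t with
  | nil => rfl
  | cons b v ih =>
    refine le_trans ?_ (ih _)
    have := countSq_add_le_countSq_mulOn b t (FreeMagma.of ())
    unfold mulOn at this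
    split_ifs at this ⊢ <;> omega

theorem one_le_countSq_chain_aSq (v : List (Fin 2)) : 1 ≤ countSq (chain aSq v) :=
  countSq_le_countSq_chain aSq v

theorem eq_of_or_eq_chain_aSq_or_two_le_countSq (M : FreeMagma Unit) :
    M = .of () ∨ (∃ v, M = chain aSq v) ∨ 2 ≤ countSq M := by
  induction M with
  | ih1 => exact .inl rfl
  | ih2 x y hx hy =>
    right
    have hmul := countSq_add_le_countSq_mul x y
    rcases hx with rfl | ⟨v, rfl⟩ | hx
    · rcases hy with rfl | ⟨v, rfl⟩ | hy
      · exact .inl ⟨[], rfl⟩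
      · exact .inl ⟨v ++ [0], (chain_append_singleton _ v 0).symm⟩
      · exact .inr (by omega)
    · rcases hy with rfl | ⟨v', rfl⟩ | hy
      · exact .inl ⟨v ++ [1], (chain_append_singleton _ v 1).symm⟩
      · have := one_le_countSq_chain_aSq v
        have := one_le_countSq_chain_aSq v'
        exact .inr (by omega)
      · exact .inr (by omega)
    · exact .inr (by omega)

theorem one_le_countSq_mul (x y : FreeMagma Unit) : 1 ≤ countSq (x * y) := by
  rcases eq_of_or_eq_chain_aSq_or_two_le_countSq (x * y) with h | ⟨v, hv⟩ | h
  · cases h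
  · exact hv ▸ one_le_countSq_chain_aSq v
  · omega

theorem subt_refl : ∀ s : FreeMagma Unit, subt s s
  | .of _ => rfl
  | .mul _ _ => .inl rfl

theorem IsFactor.of_append {v r : List (Fin 2)} {w : ℕ → Fin 2} (h : IsFactor (v ++ r) w) :
    IsFactor r w := by
  obtain ⟨i, hi⟩ := h
  refine ⟨i + v.length, fun j hj => ?_⟩
  have := hi (v.length + j) (by rw [List.length_append]; omega)
  rwa [List.getD_append_right _ _ _ _ (by omega), Nat.add_sub_cancel_left, ← add_assoc] at this

/-- `X` becomes a monomial of `I_w` once multiplied by `a` on the sides prescribed by `r`. -/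
def BadAfter (w : ℕ → Fin 2) (r : List (Fin 2)) (X : FreeMagma Unit) : Prop :=
  2 ≤ countSq X ∨ ∃ v, X = chain aSq v ∧ ¬ IsFactor (v ++ r) w

theorem badAfter_mul {w : ℕ → Fin 2} {r : List (Fin 2)} (hr : ¬ IsFactor r w)
    (x y : FreeMagma Unit) : BadAfter w r (x * y) := by
  rcases eq_of_or_eq_chain_aSq_or_two_le_countSq (x * y) with h | ⟨v, hv⟩ | h
  · cases h
  · exact .inr ⟨v, hv, fun h => hr h.of_append⟩
  · exact .inl h

theorem BadAfter.mulOn {w : ℕ → Fin 2} {b : Fin 2} {r : List (Fin 2)} {X : FreeMagma Unit}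
    (h : BadAfter w (b :: r) X) (N : FreeMagma Unit) : BadAfter w r (mulOn b X N) := by
  rcases h with h | ⟨v, rfl, hv⟩
  · exact .inl (h.trans ((Nat.le_add_right _ _).trans (countSq_add_le_countSq_mulOn b _ N)))
  cases N with
  | of _ => exact .inr ⟨v ++ [b], (chain_append_singleton _ v b).symm, by simpa using hv⟩
  | mul N₁ N₂ =>
    exact .inl ((add_le_add (one_le_countSq_chain_aSq v) (one_le_countSq_mul N₁ N₂)).trans
      (countSq_add_le_countSq_mulOn b _ _))

theorem BadAfter.badMono {w : ℕ → Fin 2} {X : FreeMagma Unit} (h : BadAfter w [] X) :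
    badMono w X := by
  rcases h with h | ⟨v, rfl, hv⟩
  · exact .inl h
  · exact .inr ⟨v, by simpa using hv, subt_refl _⟩

section Algebra

variable {F : Type} [Field F]

theorem mono_mul (M M' : FreeMagma Unit) : mono F M * mono F M' = mono F (M * M') := by
  rw [mono, mono, mono, MonoidAlgebra.single_mul_single, one_mul]

theorem mem_of_forall_mono_mem {p : Submodule F (FA F)} (h : ∀ M, mono F M ∈ p) (x : FA F) :
    x ∈ p := by
  induction x using MonoidAlgebra.induction_linear with
  | zero => exact p.zero_mem
  | add x y hx hy => exact p.add_mem hx hy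
  | single M r =>
    rw [show MonoidAlgebra.single M r = r • mono F M by
      rw [mono, MonoidAlgebra.smul_single', mul_one]]
    exact p.smul_mem r (h M)

theorem mem_span_mono_univ (x : FA F) : x ∈ Submodule.span F (mono F '' Set.univ) :=
  mem_of_forall_mono_mem (fun _ => Submodule.subset_span (Set.mem_image_of_mem _ trivial)) x

theorem mul_mem_of_mem_span {s t : Set (FreeMagma Unit)} {p : Submodule F (FA F)}
    (h : ∀ M ∈ s, ∀ M' ∈ t, mono F (M * M') ∈ p) {x y : FA F}
    (hx : x ∈ Submodule.span F (mono F '' s)) (hy : y ∈ Submodule.span F (mono F '' t)) :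
    x * y ∈ p := by
  have hMy : ∀ M ∈ s, mono F M * y ∈ p := fun M hM =>
    (Submodule.span_le (p := p.comap (LinearMap.mulLeft F (mono F M)))).2
      (by rintro _ ⟨M', hM', rfl⟩; simpa [mono_mul] using h M hM M' hM') hy
  exact (Submodule.span_le (p := p.comap (LinearMap.mulRight F y))).2
    (by rintro _ ⟨M, hM, rfl⟩; exact hMy M hM) hx

variable (F) in
def badSpan (w : ℕ → Fin 2) (r : List (Fin 2)) : Submodule F (FA F) :=
  Submodule.span F (mono F '' {X | BadAfter w r X})

theorem mul_mem_badSpan {w : ℕ → Fin 2} {r : List (Fin 2)} (hr : ¬ IsFactor r w) (f g : FA F) :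
    f * g ∈ badSpan F w r :=
  mul_mem_of_mem_span
    (fun M _ M' _ => Submodule.subset_span (Set.mem_image_of_mem _ (badAfter_mul hr M M')))
    (mem_span_mono_univ f) (mem_span_mono_univ g)

theorem mulOn_mem_badSpan {w : ℕ → Fin 2} {b : Fin 2} {r : List (Fin 2)} {x : FA F}
    (hx : x ∈ badSpan F w (b :: r)) (c : FA F) : mulOn b x c ∈ badSpan F w r := by
  have hgen : ∀ M, BadAfter w (b :: r) M → ∀ N, mono F (mulOn b M N) ∈ badSpan F w r :=
    fun M hM N => Submodule.subset_span (Set.mem_image_of_mem _ (hM.mulOn N))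
  unfold mulOn at hgen ⊢
  split_ifs at hgen ⊢
  · exact mul_mem_of_mem_span (fun M hM N _ => hgen M hM N) hx (mem_span_mono_univ c)
  · exact mul_mem_of_mem_span (fun N _ M hM => hgen M hM N) (mem_span_mono_univ c) hx

theorem badSpan_nil_le (w : ℕ → Fin 2) : badSpan F w [] ≤ relIW F w :=
  Submodule.span_mono (by rintro _ ⟨X, hX, rfl⟩; exact ⟨X, hX.badMono, rfl⟩)

theorem comb_mem_relIW {w : ℕ → Fin 2} :
    ∀ (L : List (Fin 2 × FA F)) {x : FA F}, x ∈ badSpan F w (L.map Prod.fst) →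
      comb x L ∈ relIW F w
  | [], _, hx => badSpan_nil_le w hx
  | p :: L, _, hx => comb_mem_relIW L (mulOn_mem_badSpan hx p.2)

theorem mem_IdW_iff {w : ℕ → Fin 2} {f : FreeN F} :
    f ∈ IdW F w ↔ ∀ xs : ℕ → FA F, FreeNonUnitalNonAssocAlgebra.lift F xs f ∈ relIW F w := by
  simp only [IdW, Submodule.mem_iInf, Submodule.mem_comap]
  rfl

theorem lift_monoN {B : Type*} [NonUnitalNonAssocSemiring B] [Module F B] [IsScalarTower F B B]
    [SMulCommClass F B B] (xs : ℕ → B) (t : FreeMagma ℕ) :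
    FreeNonUnitalNonAssocAlgebra.lift F xs (monoN F t) = FreeMagma.lift xs t := by
  simp [monoN, FreeNonUnitalNonAssocAlgebra.lift, MonoidAlgebra.liftMagma_apply_apply]

/-- The identity `y₁y₂ū ≡ 0` of `A_w`, for `u` not a factor of `w`. -/
theorem monoN_comb_mem_IdW {w : ℕ → Fin 2} (s s' : FreeMagma ℕ) (L : List (Fin 2 × FreeMagma ℕ))
    (hL : ¬ IsFactor (L.map Prod.fst) w) : monoN F (comb (s * s') L) ∈ IdW F w := by
  refine mem_IdW_iff.2 fun xs => ?_
  rw [lift_monoN, map_comb, map_mul]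
  exact comb_mem_relIW _ (mul_mem_badSpan (by simpa [Function.comp_def] using hL) _ _)

/-- `A_w² · A_w² = 0`: a product of two monomials of degree at least two contains `a²` twice. -/
theorem monoN_mul_mul_mem_IdW (w : ℕ → Fin 2) (a b c d : FreeMagma ℕ) :
    monoN F ((a * b) * (c * d)) ∈ IdW F w := by
  refine mem_IdW_iff.2 fun xs => ?_
  have hsq : ∀ f g : FA F, f * g ∈
      Submodule.span F (mono F '' Set.range fun p : FreeMagma Unit × FreeMagma Unit => p.1 * p.2) :=
    fun f g => mul_mem_of_mem_span
      (fun M _ M' _ => Submodule.subset_span (Set.mem_image_of_mem _ (Set.mem_range_self (M, M'))))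
      (mem_span_mono_univ f) (mem_span_mono_univ g)
  rw [lift_monoN, map_mul, map_mul, map_mul]
  refine mul_mem_of_mem_span ?_ (hsq _ _) (hsq _ _)
  rintro _ ⟨⟨x, y⟩, rfl⟩ _ ⟨⟨x', y'⟩, rfl⟩
  dsimp only
  refine Submodule.subset_span ⟨_, .inl ?_, rfl⟩
  have := one_le_countSq_mul x y
  have := one_le_countSq_mul x' y'
  have := countSq_add_le_countSq_mul (x * y) (x' * y')
  omega

theorem InVarietyOf.lift_eq_zero {w : ℕ → Fin 2} {B : Type} [NonUnitalNonAssocRing B] [Module F B]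
    [IsScalarTower F B B] [SMulCommClass F B B] (hB : InVarietyOf F w B) {t : FreeMagma ℕ}
    (ht : monoN F t ∈ IdW F w) (xs : ℕ → B) : FreeMagma.lift xs t = 0 := by
  rw [← lift_monoN (F := F)]
  exact hB _ ht xs

end Algebra

theorem one_le_numLeaves : ∀ t : FreeMagma ℕ, 1 ≤ numLeaves t
  | .of _ => le_rfl
  | .mul x _ => (one_le_numLeaves x).trans (Nat.le_add_right _ _)

theorem lift_eq_zero_or_eq_comb {B : Type*} [MulZeroClass B]
    (h4 : ∀ (a b c d : FreeMagma ℕ) (xs : ℕ → B), FreeMagma.lift xs ((a * b) * (c * d)) = 0) :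
    ∀ t : FreeMagma ℕ, 2 ≤ numLeaves t → (∀ xs : ℕ → B, FreeMagma.lift xs t = 0) ∨
      ∃ (i j : ℕ) (L : List (Fin 2 × ℕ)), t = comb (.of i * .of j) (L.map (Prod.map id .of)) ∧
        L.length + 2 = numLeaves t
  | .of _, h => by simp [numLeaves] at h
  | .mul (.of i) (.of j), _ => .inr ⟨i, j, [], rfl, rfl⟩
  | .mul (.of i) (.mul y₁ y₂), _ => by
    have : 2 ≤ numLeaves (y₁ * y₂) := add_le_add (one_le_numLeaves y₁) (one_le_numLeaves y₂)
    rcases lift_eq_zero_or_eq_comb h4 (y₁ * y₂) this with h | ⟨i', j', L, hL, hlen⟩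
    · exact .inl fun xs => by
        show FreeMagma.lift xs (.of i * (y₁ * y₂)) = 0
        rw [map_mul, h, mul_zero]
    · refine .inr ⟨i', j', L ++ [(0, i)], ?_, ?_⟩
      · rw [List.map_append, List.map_singleton, comb_append_singleton, ← hL]; rfl
      · simp only [List.length_append, List.length_singleton, numLeaves] at hlen ⊢; omega
  | .mul (.mul x₁ x₂) (.of j), _ => by
    have : 2 ≤ numLeaves (x₁ * x₂) := add_le_add (one_le_numLeaves x₁) (one_le_numLeaves x₂)
    rcases lift_eq_zero_or_eq_comb h4 (x₁ * x₂) this with h | ⟨i', j', L, hL, hlen⟩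
    · exact .inl fun xs => by
        show FreeMagma.lift xs ((x₁ * x₂) * .of j) = 0
        rw [map_mul, h, zero_mul]
    · refine .inr ⟨i', j', L ++ [(1, j)], ?_, ?_⟩
      · rw [List.map_append, List.map_singleton, comb_append_singleton, ← hL]; rfl
      · simp only [List.length_append, List.length_singleton, numLeaves] at hlen ⊢; omega
  | .mul (.mul x₁ x₂) (.mul y₁ y₂), _ => .inl (h4 x₁ x₂ y₁ y₂)

theorem intersection_nilpotent (α β : ℝ) (h0 : 0 < α) (hαβ : α < β)
    (wa wb : ℕ → Fin 2)
    (ha : (∀ n : ℕ, 1 ≤ n → Comp wa n = n + 1) ∨ ∃ T : ℕ, 0 < T ∧ ∀ i, wa i = wa (i + T))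
    (hb : (∀ n : ℕ, 1 ≤ n → Comp wb n = n + 1) ∨ ∃ T : ℕ, 0 < T ∧ ∀ i, wb i = wb (i + T))
    (hsa : Filter.Tendsto (fun n : ℕ => (pcount wa n : ℝ) / n) Filter.atTop (nhds α))
    (hsb : Filter.Tendsto (fun n : ℕ => (pcount wb n : ℝ) / n) Filter.atTop (nhds β)) :
    ∃ m : ℕ, ∀ (B : Type) (_ : NonUnitalNonAssocRing B) (_ : Module F B)
      (_ : IsScalarTower F B B) (_ : SMulCommClass F B B),
      InVarietyOf F wa B → InVarietyOf F wb B →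
      ∀ t : FreeMagma ℕ, numLeaves t = m + 2 →
        ∀ xs : ℕ → B, FreeMagma.lift xs t = 0 := by
  obtain ⟨Ca, hCa⟩ := exists_isBalanced ha
  obtain ⟨Cb, hCb⟩ := exists_isBalanced hb
  obtain ⟨m, hm⟩ := exists_length_not_isFactor hsa hsb hαβ hCa hCb
  refine ⟨m, fun B _ _ _ _ hVa hVb t ht xs => ?_⟩
  have h4 a b c d := hVa.lift_eq_zero (monoN_mul_mul_mem_IdW wa a b c d)
  rcases lift_eq_zero_or_eq_comb h4 t (by omega) with h | ⟨i, j, L, rfl, hlen⟩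
  · exact h xs
  have hu : ((L.map (Prod.map id FreeMagma.of)).map Prod.fst).length = m := by simp; omega
  rcases hm _ hu with hna | hnb
  · exact hVa.lift_eq_zero (monoN_comb_mem_IdW _ _ _ hna) xs
  · exact hVb.lift_eq_zero (monoN_comb_mem_IdW _ _ _ hnb) xs
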